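/- For every integer n ≥ 3, P_n(x) = x T_{n-1}(x) - T_{n-2}(x), where T_j denotes the Chebyshev polynomial of the first kind of degree j. -/

import Mathlib

/-!
By the binomial theorem, `f N K m p` is the coefficient of `x ^ (N + K)` in
`(1 + x) ^ m * ((1 + x) ^ p - 1) ^ N`. For `p = 2` this is the coefficient of `x ^ K` in
`(1 + x) ^ m * (2 + x) ^ N`, so multiplying by `2 + x` gives `f (N+1) (K+1) = 2 f N (K+1) + f N K`.
Since `c n k m 2 = (-1) ^ K * f N K m 2` for `n = N + K + m`, `k = N + m - K`, this is the Chebyshev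
recurrence `P_{n+2,m,2} = 2 x P_{n+1,m,2} - P_{n,m,2}` as soon as `2 m ≤ n + 1`;
`x T_{n-1} - T_{n-2}` satisfies the same recurrence, and the two sides agree for `n = 3, 4`.
-/

open Finset Polynomial Real

noncomputable section

/-- Binomial coefficient `C(a, b)` for integer lower index, zero when `b < 0` or `b > a`. -/
def chooseZ (a : ℕ) (b : ℤ) : ℤ := if 0 ≤ b then (a.choose b.toNat : ℤ) else 0

/-- `f n k m p = ∑_{i=0}^{n} (-1)^i C(n,i) C(np+m-ip, n+k)`. -/
def f (n : ℕ) (k : ℤ) (m p : ℕ) : ℤ :=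
  ∑ i ∈ Finset.range (n + 1),
    (-1) ^ i * (n.choose i : ℤ) * chooseZ (n * p + m - i * p) ((n : ℤ) + k)

/-- The coefficients `c(n,k,m,p)`. -/
def c (n : ℕ) (k : ℤ) (m p : ℕ) : ℤ :=
  if 0 ≤ k ∧ k ≤ (n : ℤ) ∧ (n : ℤ) % 2 = k % 2 ∧ 2 * (m : ℤ) ≤ (n : ℤ) + k then
    (-1) ^ ((((n : ℤ) - k) / 2).toNat) *
      f ((((n : ℤ) + k - 2 * m) / 2).toNat) (((n : ℤ) - k) / 2) m p
  else 0

/-- The polynomial `P_{n,m,p}(x) = ∑_{k=0}^n c(n,k,m,p) x^k`, as a real polynomial. -/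
def P (n m p : ℕ) : Polynomial ℝ :=
  ∑ k ∈ Finset.range (n + 1), Polynomial.C ((c n (k : ℤ) m p : ℝ)) * Polynomial.X ^ k

lemma chooseZ_natCast (a b : ℕ) : chooseZ a b = a.choose b := by
  simp [chooseZ]

lemma f_eq_coeff (N K m p : ℕ) :
    f N K m p = ((X + 1) ^ m * ((X + 1) ^ p - 1) ^ N : ℤ[X]).coeff (N + K) := by
  rw [sub_eq_neg_add, add_pow (-1), Finset.mul_sum, finsetSum_coeff, f]
  refine Finset.sum_congr rfl fun i hi => ?_
  have hiN : i * p ≤ N * p := Nat.mul_le_mul_right p (Nat.lt_succ_iff.mp (mem_range.mp hi))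
  have hexp : (X + 1 : ℤ[X]) ^ m * ((-1) ^ i * ((X + 1) ^ p) ^ (N - i) * (N.choose i : ℤ[X]))
      = C ((-1) ^ i * (N.choose i : ℤ)) * (X + 1) ^ (N * p + m - i * p) := by
    rw [← pow_mul, show N * p + m - i * p = m + (N - i) * p by rw [Nat.sub_mul]; omega, pow_add]
    simp only [map_mul, map_pow, map_neg, map_one, map_natCast]
    ring
  rw [hexp, coeff_C_mul, coeff_X_add_one_pow, ← Nat.cast_add, chooseZ_natCast]

lemma f_two_eq_coeff (N K m : ℕ) : f N K m 2 = ((X + 1) ^ m * (X + 2) ^ N : ℤ[X]).coeff K := by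
  rw [f_eq_coeff, show (X + 1 : ℤ[X]) ^ 2 - 1 = X * (X + 2) by ring, mul_pow, mul_left_comm,
    add_comm N K, coeff_X_pow_mul]

lemma f_two_succ_zero (N m : ℕ) : f (N + 1) 0 m 2 = 2 * f N 0 m 2 := by
  have h₁ := f_two_eq_coeff (N + 1) 0 m
  have h₀ := f_two_eq_coeff N 0 m
  push_cast at h₁ h₀
  rw [h₁, h₀, pow_succ, ← mul_assoc, mul_add, coeff_add, coeff_mul_X_zero,
    mul_comm, coeff_ofNat_mul, zero_add]

lemma f_two_succ_succ (N K m : ℕ) :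
    f (N + 1) (K + 1) m 2 = 2 * f N (K + 1) m 2 + f N K m 2 := by
  have h₁ := f_two_eq_coeff (N + 1) (K + 1) m
  have h₀ := f_two_eq_coeff N (K + 1) m
  push_cast at h₁ h₀
  rw [h₁, h₀, f_two_eq_coeff, pow_succ, ← mul_assoc, mul_add, coeff_add,
    coeff_mul_X, mul_comm _ (2 : ℤ[X]), coeff_ofNat_mul, add_comm]

lemma c_eq_zero {n : ℕ} {k : ℤ} {m p : ℕ}
    (h : ¬(0 ≤ k ∧ k ≤ (n : ℤ) ∧ (n : ℤ) % 2 = k % 2 ∧ 2 * (m : ℤ) ≤ (n : ℤ) + k)) :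
    c n k m p = 0 :=
  if_neg h

-- For `K > N + m` both sides vanish: `k < 0`, and `f N K m 2` is a coefficient of a polynomial
-- of degree `N + m`.
lemma c_two_eq (N K m : ℕ) {n : ℕ} {k : ℤ} (hn : n = N + K + m) (hk : k = N + m - K) :
    c n k m 2 = (-1) ^ K * f N K m 2 := by
  subst hn hk
  by_cases hK : K ≤ N + m
  · rw [c, if_pos (by omega), show ((N + K + m : ℕ) - ((N : ℤ) + m - K)) / 2 = K by omega,
      show ((N + K + m : ℕ) + ((N : ℤ) + m - K) - 2 * m) / 2 = N by omega]
    simp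
  · have hdeg : natDegree ((X + 1) ^ m * (X + 2) ^ N : ℤ[X]) < K :=
      (show natDegree _ ≤ m + N by compute_degree).trans_lt (by omega)
    rw [c, if_neg (by omega), f_two_eq_coeff, coeff_eq_zero_of_natDegree_lt hdeg, mul_zero]

lemma c_two_add_two {n m : ℕ} {k : ℤ} (hn : 2 * m ≤ n + 1) (hk : 0 ≤ k) :
    c (n + 2) k m 2 = 2 * c (n + 1) (k - 1) m 2 - c n k m 2 := by
  by_cases hmid : k ≤ n ∧ (n : ℤ) % 2 = k % 2
  · obtain ⟨N, K, hN, hK⟩ : ∃ N K : ℕ, n = N + K + m ∧ k = N + m - K :=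
      ⟨((n + k) / 2 - m).toNat, ((n - k) / 2).toNat, by omega, by omega⟩
    rw [c_two_eq (N + 1) (K + 1) m (n := n + 2) (k := k) (by omega) (by push_cast; omega),
      c_two_eq N (K + 1) m (n := n + 1) (k := k - 1) (by omega) (by push_cast; omega),
      c_two_eq N K m hN hK]
    push_cast
    rw [f_two_succ_succ]
    ring
  by_cases htop : k = n + 2
  · obtain ⟨N, hN⟩ : ∃ N, n + 1 = N + m := ⟨n + 1 - m, by omega⟩
    rw [c_two_eq (N + 1) 0 m (n := n + 2) (k := k) (by omega) (by push_cast; omega),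
      c_two_eq N 0 m (n := n + 1) (k := k - 1) (by omega) (by push_cast; omega),
      c_eq_zero (n := n) (by omega)]
    push_cast
    rw [f_two_succ_zero]
    ring
  rw [c_eq_zero (n := n + 2) (by omega), c_eq_zero (n := n + 1) (by omega),
    c_eq_zero (n := n) (by omega)]
  ring

lemma coeff_P (n m p k : ℕ) : (P n m p).coeff k = c n k m p := by
  rw [P, finsetSum_coeff]
  simp only [coeff_C_mul_X_pow]
  rw [Finset.sum_ite_eq (range (n + 1)) k]
  split_ifs with h
  · rfl
  · rw [c_eq_zero (by rw [mem_range] at h; omega), Int.cast_zero]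

lemma coeff_X_mul_P (n m p k : ℕ) : (X * P n m p).coeff k = (c n (k - 1) m p : ℝ) := by
  cases k with
  | zero => rw [coeff_X_mul_zero, c_eq_zero (by omega), Int.cast_zero]
  | succ k => rw [coeff_X_mul, coeff_P, Nat.cast_succ, add_sub_cancel_right]

lemma P_two_add_two {n m : ℕ} (hn : 2 * m ≤ n + 1) :
    P (n + 2) m 2 = 2 * X * P (n + 1) m 2 - P n m 2 := by
  ext k
  rw [coeff_sub, mul_assoc, coeff_ofNat_mul, coeff_X_mul_P, coeff_P, coeff_P,
    c_two_add_two hn (Nat.cast_nonneg k)]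
  push_cast
  ring

lemma P_three : P 3 2 2 = 2 * X ^ 3 - 2 * X := by
  have h₀ : c 3 0 2 2 = 0 := by decide
  have h₁ : c 3 1 2 2 = -2 := by decide
  have h₂ : c 3 2 2 2 = 0 := by decide
  have h₃ : c 3 3 2 2 = 2 := by decide
  simp only [P, sum_range_succ, sum_range_zero, Nat.cast_zero, Nat.cast_one, Nat.cast_ofNat,
    h₀, h₁, h₂, h₃]
  push_cast [map_neg, map_zero, map_ofNat]
  ring

lemma P_four : P 4 2 2 = 4 * X ^ 4 - 5 * X ^ 2 + 1 := by
  have h₀ : c 4 0 2 2 = 1 := by decide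
  have h₁ : c 4 1 2 2 = 0 := by decide
  have h₂ : c 4 2 2 2 = -5 := by decide
  have h₃ : c 4 3 2 2 = 0 := by decide
  have h₄ : c 4 4 2 2 = 4 := by decide
  simp only [P, sum_range_succ, sum_range_zero, Nat.cast_zero, Nat.cast_one, Nat.cast_ofNat,
    h₀, h₁, h₂, h₃, h₄]
  push_cast [map_neg, map_zero, map_one, map_ofNat]
  ring

lemma X_mul_T_sub_T_add_two (R : Type*) [CommRing R] (n : ℤ) :
    X * Chebyshev.T R (n + 2 - 1) - Chebyshev.T R (n + 2 - 2)
      = 2 * X * (X * Chebyshev.T R (n + 1 - 1) - Chebyshev.T R (n + 1 - 2))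
        - (X * Chebyshev.T R (n - 1) - Chebyshev.T R (n - 2)) := by
  rw [show n + 2 - 1 = n - 1 + 2 by ring, show n + 2 - 2 = n - 2 + 2 by ring,
    Chebyshev.T_add_two, Chebyshev.T_add_two, show n - 1 + 1 = n + 1 - 1 by ring,
    show n - 2 + 1 = n + 1 - 2 by ring]
  ring

/-- For n ≥ 3, `P_n(x) = x T_{n-1}(x) - T_{n-2}(x)`. -/
theorem statement12 (n : ℕ) (hn : 3 ≤ n) :
    P n 2 2 = Polynomial.X * Polynomial.Chebyshev.T ℝ ((n : ℤ) - 1)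
      - Polynomial.Chebyshev.T ℝ ((n : ℤ) - 2) := by
  obtain ⟨j, rfl⟩ := Nat.exists_eq_add_of_le' hn
  clear hn
  induction j using Nat.twoStepInduction with
  | zero => rw [P_three]; norm_num [Chebyshev.T_two]; ring
  | one =>
    rw [P_four, show ((1 + 3 : ℕ) : ℤ) - 1 = 1 + 2 by norm_num, Chebyshev.T_add_two]
    norm_num [Chebyshev.T_two]
    ring
  | more j ih₀ ih₁ =>
    rw [show j + 2 + 3 = j + 3 + 2 by ring, P_two_add_two (by omega), ih₀, ih₁]
    push_cast
    rw [X_mul_T_sub_T_add_two ℝ (j + 3)]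
    ring_nf
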